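/- arXiv:2111.09911 — 2 statements merged into one kernel-verified Lean document; each statement's English description precedes it below -/
import Mathlib

section
/- Let k be a field, R = k[x_1, …, x_n] with n ≥ 1, and let 𝔞 ⊂ R be a monomial ideal. Suppose there exist positive real numbers a_1, …, a_n such that for every monomial x^u ∈ 𝔞 one has Σ_i a_i u_i > Σ_i a_i. Then the k-vector space dimension of R/𝔞 is at least (3^n + 1)/2 ≥ 3^n / 2. -/
/-!
The reflection `u ↦ 2 - u` of the cube `{0,1,2}ⁿ` exchanges the two sides of the hyperplane
`∑ wᵢ uᵢ = ∑ wᵢ` and fixes `(1,…,1)`, which lies on it; hence at least `(3ⁿ + 1)/2` points of the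
cube lie in the simplex `∑ wᵢ uᵢ ≤ ∑ wᵢ`. By hypothesis their monomials lie outside the monomial
ideal, and distinct monomials outside a monomial ideal stay linearly independent modulo it.
-/

open Finset MvPolynomial

theorem card_add_one_le_two_mul_card_filter_le {α : Type*} [Fintype α] (f : α → ℝ) (c : ℝ)
    {σ : α → α} (hσ : Function.Involutive σ) (hf : ∀ x, f x + f (σ x) = 2 * c)
    (x₀ : α) (hx₀ : f x₀ = c) :
    Fintype.card α + 1 ≤ 2 * #{x | f x ≤ c} := by
  classical
  -- `σ` carries `{f > c}` injectively into `{f < c}`, which misses `x₀`.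
  have hmaps : ∀ x ∈ ({x | ¬ f x ≤ c} : Finset α), σ x ∈ ({x | f x ≤ c} : Finset α).erase x₀ := by
    intro x hx
    have hlt : f (σ x) < c := by simp only [mem_filter, mem_univ, true_and] at hx; linarith [hf x]
    exact mem_erase.mpr ⟨fun h => by rw [h] at hlt; linarith, by simp [hlt.le]⟩
  have hinj := card_le_card_of_injOn σ hmaps hσ.injective.injOn
  have herase := card_erase_add_one (s := ({x | f x ≤ c} : Finset α)) (a := x₀) (by simp [hx₀])
  have hsplit := card_filter_add_card_filter_not (s := (univ : Finset α)) (fun x => f x ≤ c)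
  rw [card_univ] at hsplit
  omega

theorem three_pow_card_add_one_le_two_mul_card {ι : Type*} [Fintype ι] [DecidableEq ι]
    (w : ι → ℝ) :
    3 ^ Fintype.card ι + 1 ≤ 2 * #{v : ι → Fin 3 | ∑ i, w i * ((v i : ℕ) : ℝ) ≤ ∑ i, w i} := by
  have hrev (a : Fin 3) : ((a : ℕ) : ℝ) + ((a.rev : ℕ) : ℝ) = 2 := by
    have : (a : ℕ) + (a.rev : ℕ) = 2 := by rw [Fin.val_rev]; omega
    exact_mod_cast this
  have := card_add_one_le_two_mul_card_filter_le (fun v : ι → Fin 3 => ∑ i, w i * ((v i : ℕ) : ℝ))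
    (∑ i, w i) (σ := fun v => Fin.rev ∘ v) (fun v => funext fun i => Fin.rev_rev _)
    (fun v => by simp only [← sum_add_distrib, mul_sum, Function.comp_apply, ← mul_add, hrev]; ring_nf)
    (fun _ => 1) (by simp)
  simpa using this

namespace MvPolynomial

variable {σ R : Type*} [CommRing R] {S : Set (σ →₀ ℕ)}

theorem monomial_mem_ideal_span_of_mem_support {p : MvPolynomial σ R}
    (hp : p ∈ Ideal.span ((monomial · (1 : R)) '' S)) {u : σ →₀ ℕ} (hu : u ∈ p.support) :
    monomial u (1 : R) ∈ Ideal.span ((monomial · (1 : R)) '' S) := by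
  obtain ⟨s, hs, hsu⟩ := mem_ideal_span_monomial_image.mp hp u hu
  refine mem_ideal_span_monomial_image.mpr fun v hv => ⟨s, hs, ?_⟩
  rwa [Finset.mem_singleton.mp (support_monomial_subset hv)]

theorem disjoint_restrictSupport_ker_mk {s : Set (σ →₀ ℕ)}
    (hs : ∀ u ∈ s, monomial u (1 : R) ∉ Ideal.span ((monomial · (1 : R)) '' S)) :
    Disjoint (restrictSupport R s)
      (LinearMap.ker
        (Ideal.Quotient.mkₐ R (Ideal.span ((monomial · (1 : R)) '' S))).toLinearMap) := by
  refine Submodule.disjoint_def.mpr fun p hps hpker => ?_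
  have hpI : p ∈ Ideal.span ((monomial · (1 : R)) '' S) := by
    simpa [Ideal.Quotient.eq_zero_iff_mem] using hpker
  by_contra hp
  obtain ⟨u, hu⟩ := support_nonempty.mpr hp
  exact hs u ((mem_restrictSupport_iff R).mp hps hu)
    (monomial_mem_ideal_span_of_mem_support hpI hu)

theorem linearIndependent_mk_monomial {s : Set (σ →₀ ℕ)}
    (hs : ∀ u ∈ s, monomial u (1 : R) ∉ Ideal.span ((monomial · (1 : R)) '' S)) :
    LinearIndependent R
      fun u : s =>
        Ideal.Quotient.mk (Ideal.span ((monomial · (1 : R)) '' S)) (monomial u (1 : R)) := by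
  have hli : LinearIndependent R fun u : s => monomial (u : σ →₀ ℕ) (1 : R) :=
    (basisMonomials σ R).linearIndependent.comp _ Subtype.val_injective
  refine hli.map (f := (Ideal.Quotient.mkₐ R _).toLinearMap) ?_
  rw [← Set.image_eq_range (monomial · (1 : R)) s, ← restrictSupport_eq_span]
  exact disjoint_restrictSupport_ker_mk hs

theorem card_le_rank_quotient_ideal_span_monomial [Nontrivial R] (s : Finset (σ →₀ ℕ))
    (hs : ∀ u ∈ s, monomial u (1 : R) ∉ Ideal.span ((monomial · (1 : R)) '' S)) :
    (#s : Cardinal) ≤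
      Module.rank R (MvPolynomial σ R ⧸ Ideal.span ((monomial · (1 : R)) '' S)) := by
  simpa using (linearIndependent_mk_monomial (s := (s : Set (σ →₀ ℕ))) hs).cardinal_lift_le_rank

end MvPolynomial

theorem stmt_2_general (k : Type*) [Field k] (n : ℕ)
    (I : Ideal (MvPolynomial (Fin n) k))
    (hmono : ∃ S : Set (Fin n →₀ ℕ),
      I = Ideal.span ((fun u => MvPolynomial.monomial u (1 : k)) '' S))
    (w : Fin n → ℝ)
    (hnewton : ∀ u : Fin n →₀ ℕ, MvPolynomial.monomial u (1 : k) ∈ I →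
      (∑ i, w i) < ∑ i, w i * (u i : ℝ)) :
    ((3 : Cardinal) ^ n + 1) ≤ 2 * Module.rank k (MvPolynomial (Fin n) k ⧸ I) ∧
    ((3 : Cardinal) ^ n) ≤ 2 * Module.rank k (MvPolynomial (Fin n) k ⧸ I) := by
  obtain ⟨S, rfl⟩ := hmono
  let T : Finset (Fin n → Fin 3) := {v | ∑ i, w i * ((v i : ℕ) : ℝ) ≤ ∑ i, w i}
  let e : (Fin n → Fin 3) ↪ (Fin n →₀ ℕ) :=
    ⟨fun v => Finsupp.equivFunOnFinite.symm fun i => v i,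
      Finsupp.equivFunOnFinite.symm.injective.comp Fin.val_injective.comp_left⟩
  have hcount : 3 ^ n + 1 ≤ 2 * #T := by
    simpa using three_pow_card_add_one_le_two_mul_card w
  have houtside : ∀ u ∈ T.map e, monomial u (1 : k) ∉ Ideal.span ((monomial · (1 : k)) '' S) := by
    simp only [mem_map, mem_filter, mem_univ, true_and, T]
    rintro _ ⟨v, hv, rfl⟩ hmem
    exact (hnewton _ hmem).not_ge (by simpa [e] using hv)
  have hrank := card_le_rank_quotient_ideal_span_monomial _ houtside
  rw [card_map] at hrank
  have hmain : (3 : Cardinal) ^ n + 1 ≤ 2 * Module.rank k _ :=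
    calc (3 : Cardinal) ^ n + 1 = ((3 ^ n + 1 : ℕ) : Cardinal) := by push_cast; rfl
      _ ≤ ((2 * #T : ℕ) : Cardinal) := by exact_mod_cast hcount
      _ ≤ 2 * Module.rank k _ := by push_cast; gcongr
  exact ⟨hmain, le_self_add.trans hmain⟩

theorem stmt_2 (k : Type*) [Field k] (n : ℕ) (hn : 1 ≤ n)
    (I : Ideal (MvPolynomial (Fin n) k))
    (hmono : ∃ S : Set (Fin n →₀ ℕ),
      I = Ideal.span ((fun u => MvPolynomial.monomial u (1 : k)) '' S))
    (w : Fin n → ℝ) (hw : ∀ i, 0 < w i)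
    (hnewton : ∀ u : Fin n →₀ ℕ, MvPolynomial.monomial u (1 : k) ∈ I →
      (∑ i, w i) < ∑ i, w i * (u i : ℝ)) :
    ((3 : Cardinal) ^ n + 1) ≤ 2 * Module.rank k (MvPolynomial (Fin n) k ⧸ I) ∧
    ((3 : Cardinal) ^ n) ≤ 2 * Module.rank k (MvPolynomial (Fin n) k ⧸ I) :=
  stmt_2_general k n I hmono w hnewton
end

section
/- Let k be a field of characteristic ≠ 2 and let R = k[x, y, z]/(xy − z²). Let 𝔭 = (y, z)·R, the prime ideal of the line L = {y = z = 0} on the quadric cone X = Spec R. Then in the localization R_𝔭 (a discrete valuation ring), the element y has valuation 2, while y generates an ideal of order 1 in the local ring at the vertex, i.e., y ∈ 𝔪 ∖ 𝔪² for 𝔪 = (x, y, z)·R. -/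
/-!
The line 𝔭 = (y, z) is the kernel of `φ : R → k[t]`, `(x, y, z) ↦ (t, 0, 0)`, hence prime, and
`x ∉ 𝔭` with `x y = z² ∈ 𝔭²`. For the upper bound on the valuation, use the parametrisation
`ψ : R → k[t][u]`, `(x, y, z) ↦ (t², u², t u)` of the cone: it sends 𝔭 into `(u)` and `y` to
`u²`, while for `s ∉ 𝔭` the constant term in `u` of `ψ(s)` is `φ(s)(t²) ≠ 0`. So `s y ∈ 𝔭³`
would force `u³ ∣ u² ψ(s)`, i.e. `u ∣ ψ(s)`. At the vertex, `R → k[ε]`, `y ↦ ε`, `x, z ↦ 0`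
sends 𝔪 into `(ε)`, so `y ∈ 𝔪²` would give `ε ∈ (ε²) = 0`.
-/

open MvPolynomial

theorem Ideal.pow_dvd_of_mem_span_pow {R S : Type*} [CommSemiring R] [CommSemiring S]
    (f : R →+* S) {s : Set R} {u : S} (hs : ∀ a ∈ s, u ∣ f a) {n : ℕ} {a : R}
    (ha : a ∈ Ideal.span s ^ n) : u ^ n ∣ f a := by
  have hmap : (Ideal.span s).map f ≤ Ideal.span {u} := by
    rw [Ideal.map_span, Ideal.span_le]
    rintro _ ⟨b, hb, rfl⟩
    exact Ideal.mem_span_singleton.2 (hs b hb)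
  have hfa := Ideal.pow_right_mono hmap n (Ideal.map_pow f _ n ▸ Ideal.mem_map_of_mem f ha)
  rwa [Ideal.span_singleton_pow, Ideal.mem_span_singleton] at hfa

theorem RingHom.ker_eq_map_of_comp_eq {A B C : Type*} [Ring A] [Ring B] [Ring C]
    {π : A →+* B} (hπ : Function.Surjective π) {Ψ : B →+* C} {g : A →+* C}
    (h : Ψ.comp π = g) : RingHom.ker Ψ = (RingHom.ker g).map π := by
  rw [← h, ← RingHom.comap_ker, Ideal.map_comap_of_surjective π hπ]

theorem MvPolynomial.ker_aeval_X_zero_zero (k : Type*) [CommRing k] :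
    RingHom.ker (aeval ![Polynomial.X, 0, 0] : MvPolynomial (Fin 3) k →ₐ[k] Polynomial k) =
      Ideal.span {X 1, X 2} := by
  set I : Ideal (MvPolynomial (Fin 3) k) := Ideal.span {X 1, X 2}
  apply le_antisymm
  · have hretract : ((Ideal.Quotient.mkₐ k I).comp (Polynomial.aeval (X 0))).comp
        (aeval ![Polynomial.X, 0, 0]) = Ideal.Quotient.mkₐ k I := by
      refine MvPolynomial.algHom_ext fun i => ?_
      fin_cases i <;> simp [I, eq_comm (a := (0 : _ ⧸ _)), Ideal.Quotient.eq_zero_iff_mem] <;>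
        exact Ideal.subset_span (by simp)
    intro q hq
    rw [← Ideal.Quotient.eq_zero_iff_mem, ← Ideal.Quotient.mkₐ_eq_mk k, ← hretract]
    simp [(RingHom.mem_ker).1 hq]
  · rw [Ideal.span_le]
    rintro _ (rfl | rfl) <;> simp

namespace QuadricCone

variable {k : Type*} [CommRing k] {R : Type*} [CommRing R] {π : MvPolynomial (Fin 3) k →+* R}
  (hπ : Function.Surjective π)
  (hker : RingHom.ker π = Ideal.span {X 0 * X 1 - X 2 ^ 2})

noncomputable def lift {T : Type*} [CommRing T] (g : MvPolynomial (Fin 3) k →+* T)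
    (hg : g (X 0 * X 1 - X 2 ^ 2) = 0) : R →+* T :=
  π.liftOfSurjective hπ ⟨g, hker ▸ (Ideal.span_singleton_le_iff_mem _).2 hg⟩

@[simp]
theorem lift_apply {T : Type*} [CommRing T] (g : MvPolynomial (Fin 3) k →+* T)
    (hg : g (X 0 * X 1 - X 2 ^ 2) = 0) (q : MvPolynomial (Fin 3) k) :
    lift hπ hker g hg (π q) = g q :=
  π.liftOfSurjective_comp_apply hπ _ q

theorem lift_comp {T : Type*} [CommRing T] (g : MvPolynomial (Fin 3) k →+* T)
    (hg : g (X 0 * X 1 - X 2 ^ 2) = 0) : (lift hπ hker g hg).comp π = g :=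
  RingHom.ext (lift_apply hπ hker g hg)

noncomputable def toLine : R →+* Polynomial k :=
  lift hπ hker (aeval (R := k) ![Polynomial.X, 0, 0]).toRingHom (by simp)

noncomputable def param : R →+* Polynomial (Polynomial k) :=
  lift hπ hker
    (aeval (R := k) (![Polynomial.C (Polynomial.X ^ 2), Polynomial.X ^ 2,
      Polynomial.C Polynomial.X * Polynomial.X] : Fin 3 → Polynomial (Polynomial k))).toRingHom
    (by simp; ring)

noncomputable def toDualNumber : R →+* DualNumber k :=
  lift hπ hker (aeval (R := k) ![0, DualNumber.eps, 0]).toRingHom (by simp)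

theorem ker_toLine : RingHom.ker (toLine hπ hker) = Ideal.span {π (X 1), π (X 2)} := by
  rw [toLine, RingHom.ker_eq_map_of_comp_eq hπ (lift_comp hπ hker _ _),
    AlgHom.toRingHom_eq_coe, RingHom.ker_coe_toRingHom, ker_aeval_X_zero_zero, Ideal.map_span,
    Set.image_pair]

theorem constantCoeff_param (s : R) :
    Polynomial.constantCoeff (param hπ hker s) = Polynomial.expand k 2 (toLine hπ hker s) := by
  obtain ⟨q, rfl⟩ := hπ s
  simp only [param, toLine, lift_apply]
  refine RingHom.congr_fun (f := Polynomial.constantCoeff.comp (aeval _).toRingHom)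
    (g := (Polynomial.expand k 2).toRingHom.comp (aeval _).toRingHom)
    (MvPolynomial.ringHom_ext (fun a => ?_) fun i => ?_) q
  · simp
  · fin_cases i <;> simp [Polynomial.coeff_zero_eq_eval_zero]

theorem not_X_dvd_param [IsDomain k] {s : R} (hs : s ∉ Ideal.span {π (X 1), π (X 2)}) :
    ¬ Polynomial.X ∣ param hπ hker s := by
  rw [Polynomial.X_dvd_iff, ← Polynomial.constantCoeff_apply, constantCoeff_param,
    Polynomial.expand_eq_zero two_pos, ← RingHom.mem_ker, ker_toLine]
  exact hs

theorem isPrime_span_y_z [IsDomain k] (hπ : Function.Surjective π)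
    (hker : RingHom.ker π = Ideal.span {X 0 * X 1 - X 2 ^ 2}) :
    (Ideal.span {π (X 1), π (X 2)}).IsPrime :=
  ker_toLine hπ hker ▸ RingHom.ker_isPrime _

theorem x_notMem_span_y_z [Nontrivial k] (hπ : Function.Surjective π)
    (hker : RingHom.ker π = Ideal.span {X 0 * X 1 - X 2 ^ 2}) :
    π (X 0) ∉ Ideal.span {π (X 1), π (X 2)} := by
  rw [← ker_toLine hπ hker, RingHom.mem_ker, toLine, lift_apply]
  simp

theorem x_mul_y_mem_span_y_z_sq (hker : RingHom.ker π = Ideal.span {X 0 * X 1 - X 2 ^ 2}) :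
    π (X 0) * π (X 1) ∈ Ideal.span {π (X 1), π (X 2)} ^ 2 := by
  have hrel : π (X 0) * π (X 1) = π (X 2) ^ 2 := by
    rw [← map_mul, ← map_pow, ← sub_eq_zero, ← map_sub, ← RingHom.mem_ker, hker]
    exact Ideal.mem_span_singleton_self _
  rw [hrel]
  exact Ideal.pow_mem_pow (Ideal.subset_span (by simp)) 2

theorem mul_y_notMem_span_y_z_cube [IsDomain k] (hπ : Function.Surjective π)
    (hker : RingHom.ker π = Ideal.span {X 0 * X 1 - X 2 ^ 2}) {s : R}
    (hs : s ∉ Ideal.span {π (X 1), π (X 2)}) :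
    s * π (X 1) ∉ Ideal.span {π (X 1), π (X 2)} ^ 3 := by
  intro hmem
  have hdvd := Ideal.pow_dvd_of_mem_span_pow (param hπ hker) (u := Polynomial.X) ?_ hmem
  · have hy : param hπ hker (π (X 1)) = Polynomial.X ^ 2 := by simp [param]
    rw [map_mul, hy, pow_succ', mul_dvd_mul_iff_right (by simp)] at hdvd
    exact not_X_dvd_param hπ hker hs hdvd
  · rintro _ (rfl | rfl) <;> simp [param]

theorem y_notMem_span_x_y_z_sq [Nontrivial k] (hπ : Function.Surjective π)
    (hker : RingHom.ker π = Ideal.span {X 0 * X 1 - X 2 ^ 2}) :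
    π (X 1) ∉ Ideal.span {π (X 0), π (X 1), π (X 2)} ^ 2 := by
  intro hmem
  have hdvd :=
    Ideal.pow_dvd_of_mem_span_pow (toDualNumber hπ hker) (u := DualNumber.eps) ?_ hmem
  · have hy : toDualNumber hπ hker (π (X 1)) = DualNumber.eps := by simp [toDualNumber]
    rw [hy, sq, DualNumber.eps_mul_eps, zero_dvd_iff] at hdvd
    simpa using congrArg TrivSqZeroExt.snd hdvd
  · rintro _ (rfl | rfl | rfl) <;> simp [toDualNumber]

end QuadricCone

open MvPolynomial in
theorem stmt_9_general (k : Type*) [Field k] :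
    ∀ (R : Type _) (_ : CommRing R) (π : MvPolynomial (Fin 3) k →+* R)
      (hπ : Function.Surjective π)
      (hker : RingHom.ker π = Ideal.span {X 0 * X 1 - (X 2 : MvPolynomial (Fin 3) k) ^ 2}),
      let y : R := π (X 1)
      let p : Ideal R := Ideal.span {π (X 1), π (X 2)}
      let m : Ideal R := Ideal.span {π (X 0), π (X 1), π (X 2)}
      -- 𝔭 is prime, and in the localization R_𝔭 the element y has valuation 2,
      -- expressed as: y lies in 𝔭²R_𝔭 but not in 𝔭³R_𝔭, i.e. some s ∉ 𝔭 has s*y ∈ 𝔭²,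
      -- and no s ∉ 𝔭 has s*y ∈ 𝔭³; while y ∈ 𝔪 ∖ 𝔪².
      p.IsPrime ∧
      (∃ s : R, s ∉ p ∧ s * y ∈ p ^ 2) ∧
      (∀ s : R, s ∉ p → s * y ∉ p ^ 3) ∧
      y ∈ m ∧ y ∉ m ^ 2 := by
  intro R _ π hπ hker y p m
  exact ⟨QuadricCone.isPrime_span_y_z hπ hker,
    ⟨π (X 0), QuadricCone.x_notMem_span_y_z hπ hker, QuadricCone.x_mul_y_mem_span_y_z_sq hker⟩,
    fun _ hs => QuadricCone.mul_y_notMem_span_y_z_cube hπ hker hs,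
    Ideal.subset_span (Set.mem_insert_of_mem _ (Set.mem_insert _ _)), QuadricCone.y_notMem_span_x_y_z_sq hπ hker⟩

open MvPolynomial in
theorem stmt_9 (k : Type*) [Field k] (hchar : (2 : k) ≠ 0) :
    ∀ (R : Type _) (_ : CommRing R) (π : MvPolynomial (Fin 3) k →+* R)
      (hπ : Function.Surjective π)
      (hker : RingHom.ker π = Ideal.span {X 0 * X 1 - (X 2 : MvPolynomial (Fin 3) k) ^ 2}),
      let y : R := π (X 1)
      let p : Ideal R := Ideal.span {π (X 1), π (X 2)}
      let m : Ideal R := Ideal.span {π (X 0), π (X 1), π (X 2)}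
      -- 𝔭 is prime, and in the localization R_𝔭 the element y has valuation 2,
      -- expressed as: y lies in 𝔭²R_𝔭 but not in 𝔭³R_𝔭, i.e. some s ∉ 𝔭 has s*y ∈ 𝔭²,
      -- and no s ∉ 𝔭 has s*y ∈ 𝔭³; while y ∈ 𝔪 ∖ 𝔪².
      p.IsPrime ∧
      (∃ s : R, s ∉ p ∧ s * y ∈ p ^ 2) ∧
      (∀ s : R, s ∉ p → s * y ∉ p ^ 3) ∧
      y ∈ m ∧ y ∉ m ^ 2 :=
  stmt_9_general k
end
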